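/- Cascade centrality of boundary seeds on the repeated path networks: consider N ≥ 3 agents and set p₀ = 3/4 for the duplex repeated path network 𝒢_R with all agents using Protocol OR, p₀ = 1/2 for the monoplex path network G_Pa, and p₀ = 1/4 for 𝒢_R with all agents using Protocol AND. Then for j ∈ {1, N}, the multiplex cascade centrality of agent j is C_j = ∑_{l=0}^{N−2} p₀^l + p₀^{N−2}, and for j ∈ {2, N−1}, C_j = 1 + ∑_{l=0}^{N−3} p₀^l + p₀^{N−3}. -/

import Mathlib

open MeasureTheory

inductive Protocol
  | OR
  | AND
deriving DecidableEq

noncomputable def ltmStep {n m : ℕ} (w : Fin m → Fin n → Fin n → ℝ)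
    (u : Fin n → Protocol) (μ : Fin n → Fin m → ℝ)
    (A : Finset (Fin n)) : Finset (Fin n) :=
  A ∪ Finset.univ.filter fun i =>
    (u i = Protocol.OR ∧ ∃ k, μ i k < ∑ j ∈ A, w k i j) ∨
    (u i = Protocol.AND ∧ ∀ k, μ i k < ∑ j ∈ A, w k i j)

noncomputable def ltmSS {n m : ℕ} (w : Fin m → Fin n → Fin n → ℝ)
    (u : Fin n → Protocol) (S₀ : Finset (Fin n))
    (μ : Fin n → Fin m → ℝ) : Finset (Fin n) :=
  (ltmStep w u μ)^[n] S₀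

noncomputable def thMeasure (n m : ℕ) : Measure (Fin n → Fin m → ℝ) :=
  Measure.pi fun _ => Measure.pi fun _ => volume.restrict (Set.Icc (0:ℝ) 1)

noncomputable def pLTM {n m : ℕ} (w : Fin m → Fin n → Fin n → ℝ)
    (u : Fin n → Protocol) (S₀ : Finset (Fin n)) (i : Fin n) : ℝ :=
  (thMeasure n m {μ | i ∈ ltmSS w u S₀ μ}).toReal

def lemStep {n m : ℕ} (S₀ : Finset (Fin n)) (u : Fin n → Protocol)
    (σ : Fin n → Fin m → Fin n) (A : Finset (Fin n)) : Finset (Fin n) :=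
  S₀ ∪ A ∪ Finset.univ.filter fun i =>
    (u i = Protocol.OR ∧ ∃ k, σ i k ∈ A) ∨
    (u i = Protocol.AND ∧ ∀ k, σ i k ∈ A)

def UReachable {n m : ℕ} (S₀ : Finset (Fin n)) (u : Fin n → Protocol)
    (σ : Fin n → Fin m → Fin n) (i : Fin n) : Prop :=
  i ∈ (lemStep S₀ u σ)^[n] S₀

instance {n m : ℕ} (S₀ : Finset (Fin n)) (u : Fin n → Protocol)
    (σ : Fin n → Fin m → Fin n) (i : Fin n) : Decidable (UReachable S₀ u σ i) := by
  unfold UReachable; infer_instance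

noncomputable def rProb {n m : ℕ} (w : Fin m → Fin n → Fin n → ℝ)
    (S₀ : Finset (Fin n)) (u : Fin n → Protocol) (i : Fin n) : ℝ :=
  ∑ σ : Fin n → Fin m → Fin n,
    if UReachable S₀ u σ i then ∏ a : Fin n, ∏ k : Fin m, w k a (σ a k) else 0

noncomputable def casCen {n m : ℕ} (w : Fin m → Fin n → Fin n → ℝ)
    (u : Fin n → Protocol) (j : Fin n) : ℝ :=
  ∑ i : Fin n, pLTM w u {j} i

noncomputable def pathW (N : ℕ) (i j : Fin N) : ℝ :=
  if j.val = i.val + 1 ∨ i.val = j.val + 1 then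
    (if i.val = 0 ∨ i.val = N - 1 then 1 else 1/2)
  else 0

noncomputable def cycleW (N : ℕ) (i j : Fin N) : ℝ :=
  if (i.val + 1) % N = j.val ∨ (j.val + 1) % N = i.val then 1/2 else 0

noncomputable def permW2 (N : ℕ) (i j : Fin N) : ℝ :=
  if ((i.val + 1) % N = j.val ∨ (j.val + 1) % N = i.val) ∧
      ¬((i.val = N - 2 ∧ j.val = N - 1) ∨ (i.val = N - 1 ∧ j.val = N - 2)) then
    (if i.val = N - 2 ∨ i.val = N - 1 then 1 else 1/2)
  else 0

/-! The seeded cascade on the path spreads as an interval around the seed `j`. An agent outside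
it has at most one active neighbour, so it joins exactly when its thresholds fire on the single
input `pathWeight` (1 at the two ends, 1/2 inside). Hence `i` is active at steady state iff every
agent between `j` (excluded) and `i` fires on one neighbour. These events involve distinct
agents, so they are independent, with probability 1 at the ends and `p₀ = 1 - (1/2)^m` (OR) or
`(1/2)^m` (AND) inside. Thus `C_j = ∑ᵢ p₀ ^ (number of interior agents between j and i)`, a
geometric sum when `j` is at, or next to, an end; reflecting the path handles the far end. -/

open Finset

namespace Protocol

-- The activation rule for an agent all of whose layers receive the same input `s`, as on a
-- network with identical layers.
def Fires {m : ℕ} : Protocol → (Fin m → ℝ) → ℝ → Prop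
  | OR, θ, s => ∃ k, θ k < s
  | AND, θ, s => ∀ k, θ k < s

variable {m : ℕ} {p : Protocol} {θ : Fin m → ℝ} {s s' : ℝ}

theorem Fires.mono (h : p.Fires θ s) (hs : s ≤ s') : p.Fires θ s' := by
  cases p
  · obtain ⟨k, hk⟩ := h
    exact ⟨k, hk.trans_le hs⟩
  · exact fun k => (h k).trans_le hs

theorem Fires.pos (h : p.Fires θ s) (hm : m ≠ 0) (hθ : 0 ≤ θ) : 0 < s := by
  cases p
  · obtain ⟨k, hk⟩ := h
    exact (hθ k).trans_lt hk
  · exact (hθ ⟨0, Nat.pos_of_ne_zero hm⟩).trans_lt (h _)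

end Protocol

theorem mem_ltmStep_const_iff {n m : ℕ} (W : Fin n → Fin n → ℝ) (u : Fin n → Protocol)
    (μ : Fin n → Fin m → ℝ) (A : Finset (Fin n)) (i : Fin n) :
    i ∈ ltmStep (fun _ => W) u μ A ↔ i ∈ A ∨ (u i).Fires (μ i) (∑ x ∈ A, W i x) := by
  simp only [ltmStep, mem_union, mem_filter, mem_univ, true_and]
  cases u i <;> simp [Protocol.Fires]

section Path

variable {N m : ℕ}

noncomputable def pathWeight (N : ℕ) (i : Fin N) : ℝ :=
  if i.val = 0 ∨ i.val = N - 1 then 1 else 1/2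

def PathAdj (x i : Fin N) : Prop :=
  x.val + 1 = i.val ∨ i.val + 1 = x.val

instance (x i : Fin N) : Decidable (PathAdj x i) :=
  inferInstanceAs (Decidable (_ ∨ _))

theorem pathWeight_pos (i : Fin N) : 0 < pathWeight N i := by
  unfold pathWeight; split <;> norm_num

theorem pathW_eq_ite (i x : Fin N) :
    pathW N i x = if PathAdj x i then pathWeight N i else 0 := by
  unfold pathW pathWeight PathAdj
  exact if_congr (by omega) rfl rfl

theorem pathW_nonneg (i x : Fin N) : 0 ≤ pathW N i x := by
  rw [pathW_eq_ite]
  exact ite_nonneg (pathWeight_pos i).le le_rfl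

theorem pathWeight_le_sum_pathW {A : Finset (Fin N)} {i x : Fin N} (hx : x ∈ A)
    (hadj : PathAdj x i) : pathWeight N i ≤ ∑ y ∈ A, pathW N i y := calc
  pathWeight N i = pathW N i x := by rw [pathW_eq_ite, if_pos hadj]
  _ ≤ ∑ y ∈ A, pathW N i y := single_le_sum (fun y _ => pathW_nonneg i y) hx

theorem sum_pathW_le_pathWeight {A : Finset (Fin N)} {i x : Fin N}
    (huniq : ∀ y ∈ A, PathAdj y i → y = x) : ∑ y ∈ A, pathW N i y ≤ pathWeight N i := calc
  ∑ y ∈ A, pathW N i y ≤ ∑ y ∈ A, if y = x then pathWeight N i else 0 := by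
    refine sum_le_sum fun y hy => ?_
    rw [pathW_eq_ite]
    by_cases hadj : PathAdj y i
    · rw [if_pos hadj, if_pos (huniq y hy hadj)]
    · rw [if_neg hadj]
      exact ite_nonneg (pathWeight_pos i).le le_rfl
  _ ≤ pathWeight N i := by
    rw [sum_ite_eq']
    split
    · exact le_rfl
    · exact (pathWeight_pos i).le

def pathSegment (j i : Fin N) : Finset (Fin N) :=
  univ.filter fun a => (j.val < a.val ∧ a.val ≤ i.val) ∨ (i.val ≤ a.val ∧ a.val < j.val)

def InPathCascade (u : Fin N → Protocol) (μ : Fin N → Fin m → ℝ) (j : Fin N) (t : ℕ)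
    (i : Fin N) : Prop :=
  i.val ≤ j.val + t ∧ j.val ≤ i.val + t ∧
    ∀ a ∈ pathSegment j i, (u a).Fires (μ a) (pathWeight N a)

namespace InPathCascade

variable {u : Fin N → Protocol} {μ : Fin N → Fin m → ℝ} {j : Fin N} {t : ℕ} {i x y : Fin N}

theorem mono (h : InPathCascade u μ j t i) : InPathCascade u μ j (t + 1) i :=
  ⟨by have := h.1; omega, by have := h.2.1; omega, h.2.2⟩

theorem of_between (hy : InPathCascade u μ j t y)
    (h : (j.val ≤ i.val ∧ i.val ≤ y.val) ∨ (y.val ≤ i.val ∧ i.val ≤ j.val)) :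
    InPathCascade u μ j t i := by
  obtain ⟨h₁, h₂, hseg⟩ := hy
  refine ⟨by omega, by omega, fun a ha => hseg a ?_⟩
  simp only [pathSegment, mem_filter, mem_univ, true_and] at ha ⊢
  omega

theorem succ_of_adj (hx : InPathCascade u μ j t x) (hadj : PathAdj x i)
    (hi : (u i).Fires (μ i) (pathWeight N i)) : InPathCascade u μ j (t + 1) i := by
  obtain ⟨h₁, h₂, hseg⟩ := hx
  unfold PathAdj at hadj
  refine ⟨by omega, by omega, fun a ha => ?_⟩
  by_cases hai : a = i
  · exact hai ▸ hi
  · have hai : a.val ≠ i.val := Fin.val_ne_of_ne hai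
    apply hseg
    simp only [pathSegment, mem_filter, mem_univ, true_and] at ha ⊢
    omega

theorem succ_cases (h : InPathCascade u μ j (t + 1) i) :
    InPathCascade u μ j t i ∨
      ∃ x, PathAdj x i ∧ InPathCascade u μ j t x ∧ (u i).Fires (μ i) (pathWeight N i) := by
  obtain ⟨h₁, h₂, hseg⟩ := h
  by_cases hnear : i.val ≤ j.val + t ∧ j.val ≤ i.val + t
  · exact .inl ⟨hnear.1, hnear.2, hseg⟩
  have hi : i ∈ pathSegment j i := by
    simp only [pathSegment, mem_filter, mem_univ, true_and]
    omega
  -- the predecessor of `i` on the way from `j`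
  let x : Fin N := ⟨if j.val < i.val then i.val - 1 else i.val + 1, by split <;> omega⟩
  have hx : x.val = if j.val < i.val then i.val - 1 else i.val + 1 := rfl
  refine .inr ⟨x, by unfold PathAdj; split at hx <;> omega, ⟨?_, ?_, fun a ha => hseg a ?_⟩,
    hseg i hi⟩
  · split at hx <;> omega
  · split at hx <;> omega
  · simp only [pathSegment, mem_filter, mem_univ, true_and] at ha ⊢
    split at hx <;> omega

-- Of the two neighbours of `i`, the one farther from `j` being reached would mean `i` is reached.
theorem eq_of_adj (hi : ¬InPathCascade u μ j t i) (hx : InPathCascade u μ j t x)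
    (hy : InPathCascade u μ j t y) (hxi : PathAdj x i) (hyi : PathAdj y i) : y = x := by
  by_contra hne
  have hne : y.val ≠ x.val := Fin.val_ne_of_ne hne
  unfold PathAdj at hxi hyi
  apply hi
  rcases le_total j.val i.val with hji | hij <;> rcases hxi with h | h
  · exact hy.of_between (.inl ⟨hji, by omega⟩)
  · exact hx.of_between (.inl ⟨hji, by omega⟩)
  · exact hx.of_between (.inr ⟨by omega, hij⟩)
  · exact hy.of_between (.inr ⟨by omega, hij⟩)

end InPathCascade

variable {u : Fin N → Protocol} {μ : Fin N → Fin m → ℝ} {j : Fin N} {t : ℕ}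

theorem mem_ltmStep_path_iff (hm : m ≠ 0) (hμ : ∀ a, 0 ≤ μ a) {A : Finset (Fin N)}
    (hA : ∀ x, x ∈ A ↔ InPathCascade u μ j t x) (i : Fin N) :
    i ∈ ltmStep (fun _ : Fin m => pathW N) u μ A ↔ InPathCascade u μ j (t + 1) i := by
  rw [mem_ltmStep_const_iff, hA]
  constructor
  · rintro (hi | hfire)
    · exact hi.mono
    by_cases hi : InPathCascade u μ j t i
    · exact hi.mono
    obtain ⟨x, hxA, hxi⟩ : ∃ x ∈ A, PathAdj x i := by
      by_contra! h
      refine (hfire.pos hm (hμ i)).ne' (sum_eq_zero fun x hx => ?_)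
      rw [pathW_eq_ite, if_neg (h x hx)]
    have hx := (hA x).1 hxA
    have hsum : ∑ y ∈ A, pathW N i y ≤ pathWeight N i := sum_pathW_le_pathWeight
      fun y hyA hyi => InPathCascade.eq_of_adj hi hx ((hA y).1 hyA) hxi hyi
    exact hx.succ_of_adj hxi (hfire.mono hsum)
  · intro h
    rcases h.succ_cases with h | ⟨x, hxi, hx, hfire⟩
    · exact .inl h
    · exact .inr (hfire.mono (pathWeight_le_sum_pathW ((hA x).2 hx) hxi))

theorem mem_iterate_ltmStep_path (hm : m ≠ 0) (hμ : ∀ a, 0 ≤ μ a) (t : ℕ) (i : Fin N) :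
    i ∈ (ltmStep (fun _ : Fin m => pathW N) u μ)^[t] {j} ↔ InPathCascade u μ j t i := by
  induction t generalizing i with
  | zero =>
    rw [Function.iterate_zero, id, mem_singleton]
    constructor
    · rintro rfl
      refine ⟨le_rfl, le_rfl, fun a ha => ?_⟩
      simp only [pathSegment, mem_filter, mem_univ, true_and] at ha
      omega
    · rintro ⟨h₁, h₂, -⟩
      exact Fin.ext (by omega)
  | succ t ih =>
    rw [Function.iterate_succ_apply']
    exact mem_ltmStep_path_iff hm hμ ih i

theorem mem_ltmSS_path (hm : m ≠ 0) (hμ : ∀ a, 0 ≤ μ a) (i : Fin N) :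
    i ∈ ltmSS (fun _ : Fin m => pathW N) u {j} μ ↔
      ∀ a ∈ pathSegment j i, (u a).Fires (μ a) (pathWeight N a) := by
  rw [ltmSS, mem_iterate_ltmStep_path hm hμ, InPathCascade]
  exact ⟨fun h => h.2.2, fun h => ⟨by omega, by omega, h⟩⟩

end Path

section Thresholds

instance : IsProbabilityMeasure (volume.restrict (Set.Icc (0 : ℝ) 1)) :=
  ⟨by rw [Measure.restrict_apply_univ, Real.volume_Icc, sub_zero, ENNReal.ofReal_one]⟩

noncomputable def unifCube (m : ℕ) : Measure (Fin m → ℝ) :=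
  Measure.pi fun _ => volume.restrict (Set.Icc (0 : ℝ) 1)

instance (m : ℕ) : IsProbabilityMeasure (unifCube m) := by
  unfold unifCube; infer_instance

variable {m : ℕ} {c : ℝ}

theorem unifCube_real_univ_pi (s : Set ℝ) :
    (unifCube m (Set.univ.pi fun _ => s)).toReal =
      (volume.restrict (Set.Icc (0 : ℝ) 1) s).toReal ^ m := by
  rw [unifCube, Measure.pi_pi, prod_const, card_univ, Fintype.card_fin, ENNReal.toReal_pow]

theorem unifCube_fires_and (hc₀ : 0 ≤ c) (hc₁ : c ≤ 1) :
    (unifCube m {θ | Protocol.AND.Fires θ c}).toReal = c ^ m := by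
  change (unifCube m {θ | ∀ k, θ k < c}).toReal = _
  have hset : {θ : Fin m → ℝ | ∀ k, θ k < c} = Set.univ.pi fun _ => Set.Iio c := by
    ext θ; simp
  have hinter : Set.Iio c ∩ Set.Icc 0 1 = Set.Ico 0 c := by
    ext x; simp only [Set.mem_inter_iff, Set.mem_Iio, Set.mem_Icc, Set.mem_Ico]
    exact ⟨fun ⟨h, h₀, _⟩ => ⟨h₀, h⟩, fun ⟨h₀, h⟩ => ⟨h, h₀, by linarith⟩⟩
  rw [hset, unifCube_real_univ_pi, Measure.restrict_apply measurableSet_Iio, hinter,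
    Real.volume_Ico, sub_zero, ENNReal.toReal_ofReal hc₀]

theorem unifCube_fires_or (hc₀ : 0 ≤ c) (hc₁ : c ≤ 1) :
    (unifCube m {θ | Protocol.OR.Fires θ c}).toReal = 1 - (1 - c) ^ m := by
  change (unifCube m {θ | ∃ k, θ k < c}).toReal = _
  have hset : {θ : Fin m → ℝ | ∃ k, θ k < c}ᶜ = Set.univ.pi fun _ => Set.Ici c := by
    ext θ
    simp only [Set.mem_compl_iff, Set.mem_ofPred_eq, Set.mem_univ_pi, Set.mem_Ici, not_exists,
      not_lt]
  have hinter : Set.Ici c ∩ Set.Icc 0 1 = Set.Icc c 1 := by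
    ext x; simp only [Set.mem_inter_iff, Set.mem_Ici, Set.mem_Icc]
    exact ⟨fun ⟨h, _, h₁⟩ => ⟨h, h₁⟩, fun ⟨h, h₁⟩ => ⟨h, by linarith, h₁⟩⟩
  have hmeas : MeasurableSet {θ : Fin m → ℝ | ∃ k, θ k < c}ᶜ :=
    hset ▸ MeasurableSet.univ_pi fun _ => measurableSet_Ici
  rw [← compl_compl {θ : Fin m → ℝ | ∃ k, θ k < c}, ← measureReal_def,
    probReal_compl_eq_one_sub hmeas, measureReal_def, hset, unifCube_real_univ_pi,
    Measure.restrict_apply measurableSet_Ici, hinter, Real.volume_Icc,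
    ENNReal.toReal_ofReal (by linarith)]

theorem thMeasure_eq_pi (n m : ℕ) : thMeasure n m = Measure.pi fun _ : Fin n => unifCube m := rfl

theorem ae_nonneg_thMeasure (n m : ℕ) : ∀ᵐ μ ∂thMeasure n m, ∀ a, 0 ≤ μ a := by
  have hθ : ∀ᵐ θ ∂unifCube m, ∀ k, 0 ≤ θ k := ae_all_iff.2 fun _ =>
    Measure.tendsto_eval_ae_ae.eventually
      ((ae_restrict_mem measurableSet_Icc).mono fun _ hx => hx.1)
  exact ae_all_iff.2 fun _ => Measure.tendsto_eval_ae_ae.eventually hθ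

end Thresholds

section PathProbability

variable {N m : ℕ}

theorem pathWeight_of_end {a : Fin N} (ha : a.val = 0 ∨ a.val = N - 1) : pathWeight N a = 1 :=
  if_pos ha

theorem pathWeight_of_interior {a : Fin N} (ha : ¬(a.val = 0 ∨ a.val = N - 1)) :
    pathWeight N a = 1 / 2 :=
  if_neg ha

theorem unifCube_fires_pathWeight_of_end (hm : m ≠ 0) (p : Protocol) {a : Fin N}
    (ha : a.val = 0 ∨ a.val = N - 1) :
    (unifCube m {θ | p.Fires θ (pathWeight N a)}).toReal = 1 := by
  rw [pathWeight_of_end ha]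
  cases p
  · rw [unifCube_fires_or zero_le_one le_rfl, sub_self, zero_pow hm, sub_zero]
  · rw [unifCube_fires_and zero_le_one le_rfl, one_pow]

theorem pLTM_path (hm : m ≠ 0) (u : Fin N → Protocol) (j i : Fin N) :
    pLTM (fun _ : Fin m => pathW N) u {j} i =
      ∏ a ∈ pathSegment j i, (unifCube m {θ | (u a).Fires θ (pathWeight N a)}).toReal := by
  have hevent : {μ | i ∈ ltmSS (fun _ : Fin m => pathW N) u {j} μ} =ᵐ[thMeasure N m]
      Set.univ.pi fun a => {θ | a ∈ pathSegment j i → (u a).Fires θ (pathWeight N a)} := by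
    refine Filter.Eventually.set_eq ?_
    filter_upwards [ae_nonneg_thMeasure N m] with μ hμ
    rw [Set.mem_univ_pi]
    exact mem_ltmSS_path hm hμ i
  rw [pLTM, measure_congr hevent, thMeasure_eq_pi, Measure.pi_pi, ENNReal.toReal_prod,
    ← prod_subset (subset_univ (pathSegment j i))]
  · refine prod_congr rfl fun a ha => ?_
    simp only [ha, true_imp_iff]
  · intro a _ ha
    simp [ha]

end PathProbability

section Counting

variable {N m : ℕ}

def interiorCount (j i : Fin N) : ℕ :=
  #{a ∈ pathSegment j i | ¬(a.val = 0 ∨ a.val = N - 1)}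

theorem casCen_path_eq (hm : m ≠ 0) (u : Fin N → Protocol) (j : Fin N) {p : ℝ}
    (hp : ∀ a : Fin N, ¬(a.val = 0 ∨ a.val = N - 1) →
      (unifCube m {θ | (u a).Fires θ (pathWeight N a)}).toReal = p) :
    casCen (fun _ : Fin m => pathW N) u j = ∑ i, p ^ interiorCount j i := by
  refine sum_congr rfl fun i _ => ?_
  rw [pLTM_path hm, interiorCount, ← prod_const, prod_filter]
  refine prod_congr rfl fun a _ => ?_
  split_ifs with ha
  · exact unifCube_fires_pathWeight_of_end hm _ ha
  · exact hp a ha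

theorem interiorCount_rev (j i : Fin N) : interiorCount j.rev i.rev = interiorCount j i := by
  refine card_nbij' Fin.rev Fin.rev ?_ ?_ (fun a _ => Fin.rev_rev a) (fun a _ => Fin.rev_rev a) <;>
  · intro a ha
    simp only [mem_coe, mem_filter, pathSegment, mem_univ, true_and, Fin.val_rev] at ha ⊢
    omega

theorem sum_pow_interiorCount_rev (p : ℝ) (j : Fin N) :
    ∑ i, p ^ interiorCount j.rev i = ∑ i, p ^ interiorCount j i := by
  rw [← Equiv.sum_comp Fin.revPerm]
  simp only [Fin.revPerm_apply, interiorCount_rev]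

theorem interiorCount_of_val_le_one {j : Fin N} (hj : j.val ≤ 1) (i : Fin N) :
    interiorCount j i = min i.val (N - 2) - j.val := by
  have hset : {a ∈ pathSegment j i | ¬(a.val = 0 ∨ a.val = N - 1)} =
      (Ioc j.val (min i.val (N - 2))).attachFin fun v hv => by rw [mem_Ioc] at hv; omega := by
    ext a
    simp only [pathSegment, mem_filter, mem_univ, true_and, mem_attachFin, mem_Ioc]
    omega
  rw [interiorCount, hset, card_attachFin, Nat.card_Ioc]

theorem sum_range_succ_pow_min (p : ℝ) (M : ℕ) :
    ∑ v ∈ range (M + 1), p ^ min v (M - 1) = ∑ l ∈ range M, p ^ l + p ^ (M - 1) := by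
  rw [sum_range_succ, min_eq_right (Nat.sub_le M 1)]
  congr 1
  refine sum_congr rfl fun v hv => ?_
  rw [min_eq_left (by rw [mem_range] at hv; omega)]

theorem sum_pow_interiorCount_of_end (p : ℝ) {j : Fin N} (hj : j.val = 0 ∨ j.val = N - 1) :
    ∑ i, p ^ interiorCount j i = ∑ l ∈ range (N - 1), p ^ l + p ^ (N - 2) := by
  wlog hj₀ : j.val = 0 generalizing j
  · rw [← sum_pow_interiorCount_rev]
    exact this (.inl (by rw [Fin.val_rev]; omega)) (by rw [Fin.val_rev]; omega)
  obtain ⟨M, rfl⟩ : ∃ M, N = M + 1 := ⟨N - 1, by omega⟩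
  simp only [interiorCount_of_val_le_one (show j.val ≤ 1 by omega), hj₀, Nat.sub_zero]
  rw [Fin.sum_univ_eq_sum_range (fun v => p ^ min v (M + 1 - 2)), Nat.add_sub_cancel,
    show M + 1 - 2 = M - 1 by omega, sum_range_succ_pow_min]

theorem sum_pow_interiorCount_of_next_to_end (hN : 2 ≤ N) (p : ℝ) {j : Fin N}
    (hj : j.val = 1 ∨ j.val = N - 2) :
    ∑ i, p ^ interiorCount j i = 1 + ∑ l ∈ range (N - 2), p ^ l + p ^ (N - 3) := by
  wlog hj₁ : j.val = 1 generalizing j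
  · rw [← sum_pow_interiorCount_rev]
    exact this (.inl (by rw [Fin.val_rev]; omega)) (by rw [Fin.val_rev]; omega)
  obtain ⟨M, rfl⟩ : ∃ M, N = M + 2 := ⟨N - 2, by omega⟩
  simp only [interiorCount_of_val_le_one (show j.val ≤ 1 by omega), hj₁, Nat.add_sub_cancel]
  rw [Fin.sum_univ_eq_sum_range (fun v => p ^ (min v M - 1)), sum_range_succ']
  have hshift : ∀ v, min (v + 1) M - 1 = min v (M - 1) := fun v => by omega
  simp only [hshift, sum_range_succ_pow_min, Nat.zero_min, Nat.zero_sub, pow_zero,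
    show M + 2 - 3 = M - 1 by omega]
  ring

end Counting

-- Agents are indexed from 0: the paper's agents 1, 2, N - 1, N are `j.val = 0, 1, N - 2, N - 1`.
/-- cascade centrality of boundary seeds on the (repeated) path
networks, with `p₀ = 3/4` (duplex, all OR), `p₀ = 1/2` (monoplex path, either
protocol) and `p₀ = 1/4` (duplex, all AND): for 1-based `j ∈ {1, N}` (0-based
`j.val ∈ {0, N−1}`), `C_j = ∑_{l=0}^{N−2} p₀^l + p₀^{N−2}`; for 1-based
`j ∈ {2, N−1}` (0-based `j.val ∈ {1, N−2}`),
`C_j = 1 + ∑_{l=0}^{N−3} p₀^l + p₀^{N−3}`. -/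
theorem path_cascade_centrality (N : ℕ) (hN : 3 ≤ N) (j : Fin N) :
    ((j.val = 0 ∨ j.val = N - 1) →
      (casCen (fun _ : Fin 2 => pathW N) (fun _ => Protocol.OR) j =
        (∑ l ∈ Finset.range (N - 1), (3/4 : ℝ) ^ l) + (3/4 : ℝ) ^ (N - 2)) ∧
      (∀ u : Fin N → Protocol,
        casCen (fun _ : Fin 1 => pathW N) u j =
          (∑ l ∈ Finset.range (N - 1), (1/2 : ℝ) ^ l) + (1/2 : ℝ) ^ (N - 2)) ∧
      (casCen (fun _ : Fin 2 => pathW N) (fun _ => Protocol.AND) j =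
        (∑ l ∈ Finset.range (N - 1), (1/4 : ℝ) ^ l) + (1/4 : ℝ) ^ (N - 2))) ∧
    ((j.val = 1 ∨ j.val = N - 2) →
      (casCen (fun _ : Fin 2 => pathW N) (fun _ => Protocol.OR) j =
        1 + (∑ l ∈ Finset.range (N - 2), (3/4 : ℝ) ^ l) + (3/4 : ℝ) ^ (N - 3)) ∧
      (∀ u : Fin N → Protocol,
        casCen (fun _ : Fin 1 => pathW N) u j =
          1 + (∑ l ∈ Finset.range (N - 2), (1/2 : ℝ) ^ l) + (1/2 : ℝ) ^ (N - 3)) ∧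
      (casCen (fun _ : Fin 2 => pathW N) (fun _ => Protocol.AND) j =
        1 + (∑ l ∈ Finset.range (N - 2), (1/4 : ℝ) ^ l) + (1/4 : ℝ) ^ (N - 3))) := by
  have hOR : casCen (fun _ : Fin 2 => pathW N) (fun _ => Protocol.OR) j =
      ∑ i, (3/4 : ℝ) ^ interiorCount j i :=
    casCen_path_eq two_ne_zero _ j fun a ha => by
      rw [pathWeight_of_interior ha, unifCube_fires_or (by norm_num) (by norm_num)]
      norm_num
  have hAND : casCen (fun _ : Fin 2 => pathW N) (fun _ => Protocol.AND) j =
      ∑ i, (1/4 : ℝ) ^ interiorCount j i :=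
    casCen_path_eq two_ne_zero _ j fun a ha => by
      rw [pathWeight_of_interior ha, unifCube_fires_and (by norm_num) (by norm_num)]
      norm_num
  have hmono (u : Fin N → Protocol) : casCen (fun _ : Fin 1 => pathW N) u j =
      ∑ i, (1/2 : ℝ) ^ interiorCount j i :=
    casCen_path_eq one_ne_zero _ j fun a ha => by
      rw [pathWeight_of_interior ha]
      cases u a
      · rw [unifCube_fires_or (by norm_num) (by norm_num)]
        norm_num
      · rw [unifCube_fires_and (by norm_num) (by norm_num)]
        norm_num
  refine ⟨fun hj => ?_, fun hj => ?_⟩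
  · simp only [hOR, hAND, hmono, sum_pow_interiorCount_of_end _ hj, implies_true, and_self]
  · simp only [hOR, hAND, hmono, sum_pow_interiorCount_of_next_to_end (by omega) _ hj,
      implies_true, and_self]
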